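/- arXiv:1910.12172 — 4 statements merged into one kernel-verified Lean document; each statement's English description precedes it below -/
import Mathlib

section
/- Let M = (m_1, ..., m_n) be a strictly increasing integer sequence and A = (a_1, ..., a_n) an arbitrary integer sequence. Define inv(A) as the number of pairs i < j with a_i ≥ a_j, and cost(A) = Σ_{i=1}^n |a_i - m_i|. Then inv(A) ≤ 2·cost(A). -/
/-!
Write `d k = a k - m k`. For a weak inversion `i < j` we have
`(a i - m i) + (m j - a j) ≥ m j - m i > 0`, so charge the inversion to the endpoint whose term
is larger: to `i` when `a i - m i ≥ m j - a j`, and then `m i < m j ≤ m i + 2 d i`; to `j`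
otherwise, and then `m j + 2 d j < m i < m j`. Since `m` is injective, at most `2 |d k|`
inversions are charged to `k`.
-/

open Finset

variable {ι : Type*} [Fintype ι] [LinearOrder ι]

def chargedAbove (m a : ι → ℤ) (k : ι) : Finset ι :=
  {j | k < j ∧ a j ≤ a k ∧ m j - a j ≤ a k - m k}

def chargedBelow (m a : ι → ℤ) (k : ι) : Finset ι :=
  {i | i < k ∧ a k ≤ a i ∧ a i - m i < m k - a k}

theorem card_inversions_eq_sum_charged (m a : ι → ℤ) :
    #{p : ι × ι | p.1 < p.2 ∧ a p.2 ≤ a p.1} =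
      ∑ k, (#(chargedAbove m a k) + #(chargedBelow m a k)) := by
  have indicator_split : ∀ p : ι × ι, (if p.1 < p.2 ∧ a p.2 ≤ a p.1 then 1 else 0) =
      (if p.1 < p.2 ∧ a p.2 ≤ a p.1 ∧ m p.2 - a p.2 ≤ a p.1 - m p.1 then 1 else 0) +
      (if p.1 < p.2 ∧ a p.2 ≤ a p.1 ∧ a p.1 - m p.1 < m p.2 - a p.2 then 1 else 0) := by
    intro p
    by_cases hc : m p.2 - a p.2 ≤ a p.1 - m p.1
    · simp [hc, not_lt.mpr hc]
    · simp [hc, not_le.mp hc]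
  rw [card_filter, sum_congr rfl fun p _ => indicator_split p, sum_add_distrib,
    Fintype.sum_prod_type, Fintype.sum_prod_type_right, ← sum_add_distrib]
  simp only [chargedAbove, chargedBelow, card_filter]

variable {m : ι → ℤ}

theorem card_chargedAbove_le (hm : StrictMono m) (a : ι → ℤ) (k : ι) :
    #(chargedAbove m a k) ≤ (2 * (a k - m k)).toNat := by
  calc #(chargedAbove m a k) ≤ #(Ioc (m k) (m k + 2 * (a k - m k))) := by
        refine card_le_card_of_injOn m (fun j hj => ?_) hm.injective.injOn
        simp only [chargedAbove, coe_filter, mem_univ, true_and, Set.mem_ofPred_eq] at hj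
        have := hm hj.1
        simp only [coe_Ioc, Set.mem_Ioc]
        omega
    _ = (2 * (a k - m k)).toNat := by rw [Int.card_Ioc, add_sub_cancel_left]

theorem card_chargedBelow_le (hm : StrictMono m) (a : ι → ℤ) (k : ι) :
    #(chargedBelow m a k) ≤ (-(2 * (a k - m k))).toNat := by
  calc #(chargedBelow m a k) ≤ #(Ico (m k + 2 * (a k - m k)) (m k)) := by
        refine card_le_card_of_injOn m (fun i hi => ?_) hm.injective.injOn
        simp only [chargedBelow, coe_filter, mem_univ, true_and, Set.mem_ofPred_eq] at hi
        have := hm hi.1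
        simp only [coe_Ico, Set.mem_Ico]
        omega
    _ = (-(2 * (a k - m k))).toNat := by rw [Int.card_Ico, sub_add_cancel_left]

theorem card_charged_le (hm : StrictMono m) (a : ι → ℤ) (k : ι) :
    ((#(chargedAbove m a k) + #(chargedBelow m a k) : ℕ) : ℤ) ≤ 2 * |a k - m k| := by
  calc ((#(chargedAbove m a k) + #(chargedBelow m a k) : ℕ) : ℤ)
      ≤ (((2 * (a k - m k)).toNat + (-(2 * (a k - m k))).toNat : ℕ) : ℤ) := by
        gcongr
        exacts [card_chargedAbove_le hm a k, card_chargedBelow_le hm a k]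
    _ = 2 * |a k - m k| := by
        rw [Int.toNat_add_toNat_neg_eq_natAbs, Int.natCast_natAbs, abs_mul, abs_two]

/-- Combinatorial inversion lemma: if `m` is strictly increasing and `a` is arbitrary,
then the number of weak inversions of `a` is at most twice the ℓ1 distance from `a` to `m`. -/
theorem inv_le_two_cost (n : ℕ) (m a : Fin n → ℤ) (hm : StrictMono m) :
    ((Finset.univ.filter (fun p : Fin n × Fin n => p.1 < p.2 ∧ a p.2 ≤ a p.1)).card : ℤ)
      ≤ 2 * ∑ i, |a i - m i| := by
  rw [card_inversions_eq_sum_charged m a, Nat.cast_sum, mul_sum]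
  exact sum_le_sum fun k _ => card_charged_le hm a k
end

section
/- If B = (b_1, ..., b_n) is a non-decreasing integer sequence and M = (m_1, ..., m_n) is a strictly increasing integer sequence, then the number of pairs i < j with b_i = b_j is at most 2·Σ_{i=1}^n |b_i - m_i|. -/
/-!
Charge each tie `i < j` to whichever endpoint `k` has the larger cost `|b k - m k|`, and record
the other endpoint `l`. Then `m l` lies within `|b k - m k|` of `b l = b k` and differs from
`m k`, so at most `2 |b k - m k|` ties are charged to `k`, since `m` is injective.
-/

open Finset Function

section
variable {ι : Type*} [Fintype ι]

theorem card_filter_prod_eq_sum (P : ι → ι → Prop) [∀ k l, Decidable (P k l)] :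
    #{q : ι × ι | P q.1 q.2} = ∑ k, #{l | P k l} := by
  simp only [card_filter, Fintype.sum_prod_type]

variable [DecidableEq ι]

theorem card_filter_ne_abs_sub_le {m : ι → ℤ} (hm : Injective m) (k : ι) {a c : ℤ}
    (hk : |a - m k| ≤ c) : (#{l | l ≠ k ∧ |a - m l| ≤ c} : ℤ) ≤ 2 * c := by
  have hmaps : Set.MapsTo m ({l | l ≠ k ∧ |a - m l| ≤ c} : Finset ι)
      ((Icc (a - c) (a + c)).erase (m k)) := by
    intro l hl
    simp only [coe_filter, mem_univ, true_and, Set.mem_ofPred_eq] at hl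
    rw [mem_coe, mem_erase, mem_Icc, hm.ne_iff]
    exact ⟨hl.1, by constructor <;> linarith [abs_le.mp hl.2]⟩
  have hmk : m k ∈ Icc (a - c) (a + c) := by
    rw [mem_Icc]; constructor <;> linarith [abs_le.mp hk]
  calc (#{l | l ≠ k ∧ |a - m l| ≤ c} : ℤ) ≤ #((Icc (a - c) (a + c)).erase (m k)) := by
        exact_mod_cast card_le_card_of_injOn m hmaps hm.injOn
    _ = 2 * c := by
        rw [card_erase_of_mem hmk, Int.card_Icc]
        have := (abs_nonneg _).trans hk
        omega

variable [LinearOrder ι]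

theorem card_ties_le_two_mul_sum_abs_sub (b : ι → ℤ) {m : ι → ℤ} (hm : Injective m) :
    (#{p : ι × ι | p.1 < p.2 ∧ b p.1 = b p.2} : ℤ) ≤ 2 * ∑ i, |b i - m i| := by
  set cost : ι → ℤ := fun i => |b i - m i|
  let charge : ι × ι → ι × ι := fun p => if cost p.1 ≤ cost p.2 then p.swap else p
  have hmaps : Set.MapsTo charge {p | p.1 < p.2 ∧ b p.1 = b p.2}
      {q | q.2 ≠ q.1 ∧ |b q.1 - m q.2| ≤ cost q.1} := by
    rintro ⟨i, j⟩ ⟨hij, hb⟩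
    by_cases h : cost i ≤ cost j
    · simp only [charge, if_pos h]
      exact ⟨hij.ne, hb ▸ h⟩
    · simp only [charge, if_neg h]
      exact ⟨hij.ne', hb ▸ (not_le.mp h).le⟩
  have hinj : Set.InjOn charge {p | p.1 < p.2 ∧ b p.1 = b p.2} := by
    refine Set.LeftInvOn.injOn (f₁' := fun q => (min q.1 q.2, max q.1 q.2)) ?_
    rintro ⟨i, j⟩ ⟨hij, -⟩
    by_cases h : cost i ≤ cost j <;> simp [charge, h, hij.le]
  calc (#{p : ι × ι | p.1 < p.2 ∧ b p.1 = b p.2} : ℤ)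
      ≤ #{q : ι × ι | q.2 ≠ q.1 ∧ |b q.1 - m q.2| ≤ cost q.1} := by
        exact_mod_cast card_le_card_of_injOn charge (by simpa using hmaps) (by simpa using hinj)
    _ = ∑ k, (#{l | l ≠ k ∧ |b k - m l| ≤ cost k} : ℤ) := by
        rw [card_filter_prod_eq_sum (fun k l => l ≠ k ∧ |b k - m l| ≤ cost k)]; push_cast; rfl
    _ ≤ ∑ k, 2 * cost k := sum_le_sum fun k _ => card_filter_ne_abs_sub_le hm k le_rfl
    _ = 2 * ∑ i, |b i - m i| := (mul_sum ..).symm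

end

theorem ties_le_two_cost_general (n : ℕ) (b m : Fin n → ℤ) (hm : StrictMono m) :
    ((Finset.univ.filter (fun p : Fin n × Fin n => p.1 < p.2 ∧ b p.1 = b p.2)).card : ℤ)
      ≤ 2 * ∑ i, |b i - m i| :=
  card_ties_le_two_mul_sum_abs_sub b hm.injective

/-- If `b` is non-decreasing and `m` is strictly increasing, then the number of tied pairs
`i < j` with `b i = b j` is at most twice the ℓ1 distance from `b` to `m`. -/
theorem ties_le_two_cost (n : ℕ) (b m : Fin n → ℤ) (hb : Monotone b) (hm : StrictMono m) :
    ((Finset.univ.filter (fun p : Fin n × Fin n => p.1 < p.2 ∧ b p.1 = b p.2)).card : ℤ)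
      ≤ 2 * ∑ i, |b i - m i| :=
  ties_le_two_cost_general n b m hm
end

section
/- Let M be strictly increasing integers and define Δ(A) = 2·cost(A) − inv(A) for integer sequences A (with cost and inv relative to M). Suppose B minimizes Δ over all integer sequences with entries in [m_1, m_n], and among minimizers has maximum sum of entries. Then B is non-decreasing. -/
/-- The number of weak inversions of an integer sequence `A` relative to a strictly
increasing sequence `m`. -/
def invCount {n : ℕ} (A : Fin n → ℤ) : ℤ :=
  ((Finset.univ.filter (fun p : Fin n × Fin n => p.1 < p.2 ∧ A p.2 ≤ A p.1)).card : ℤ)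

/-- The ℓ1 distance of `A` from `m`. -/
def cost {n : ℕ} (m A : Fin n → ℤ) : ℤ := ∑ i, |A i - m i|

/-- The potential `Δ(A) = 2 cost(A) − inv(A)`. -/
def Δ {n : ℕ} (m A : Fin n → ℤ) : ℤ := 2 * cost m A - invCount A

/-!
Suppose `B i > B (i+1)` and put `v = B i`, `u = B (i+1)`. Raising `B (i+1)` to `v` and lowering
`B i` to `u` give two admissible sequences whose costs add up to at most `2 cost(B)` (the
quadrangle inequality for `|x - y|`, as `m i < m (i+1)`) and whose inversion numbers add up to
exactly `2 inv(B)`, since an index outside `{i, i+1}` compares in the same way with both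
positions. Hence `Δ` of the two sequences sums to at most `2 Δ(B)`; minimality forces the raised
sequence to be a minimizer too, and its sum exceeds that of `B`.
-/

open Function

lemma Fintype.sum_update_eq_sum_add_sub {ι M : Type*} [Fintype ι] [DecidableEq ι]
    [AddCommGroup M] (f : ι → M) (k : ι) (x : M) :
    ∑ i, update f k x i = ∑ i, f i + (x - f k) := by
  rw [Finset.sum_update_of_mem (Finset.mem_univ k), Finset.sdiff_singleton_eq_erase,
    ← Finset.add_sum_erase _ _ (Finset.mem_univ k)]
  abel

lemma abs_sub_add_abs_sub_le_of_le {u v p q : ℤ} (huv : u ≤ v) (hpq : p ≤ q) :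
    |v - q| + |u - p| ≤ |v - p| + |u - q| := by
  rcases abs_cases (v - q) with ⟨h₁, _⟩ | ⟨h₁, _⟩ <;>
  rcases abs_cases (u - p) with ⟨h₂, _⟩ | ⟨h₂, _⟩ <;>
  rcases abs_cases (v - p) with ⟨h₃, _⟩ | ⟨h₃, _⟩ <;>
  rcases abs_cases (u - q) with ⟨h₄, _⟩ | ⟨h₄, _⟩ <;> omega

lemma cost_update {n : ℕ} (m A : Fin n → ℤ) (k : Fin n) (x : ℤ) :
    cost m (update A k x) = cost m A + (|x - m k| - |A k - m k|) := by
  simp only [cost, apply_update (fun i t => |t - m i|)]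
  exact Fintype.sum_update_eq_sum_add_sub _ k _

def inversionIndicator {n : ℕ} (A : Fin n → ℤ) (p : Fin n × Fin n) : ℤ :=
  if p.1 < p.2 ∧ A p.2 ≤ A p.1 then 1 else 0

lemma invCount_eq_sum_inversionIndicator {n : ℕ} (A : Fin n → ℤ) :
    invCount A = ∑ p, inversionIndicator A p := by
  rw [invCount, Finset.card_filter]
  push_cast
  rfl

section AdjacentPositions

variable {n : ℕ} {j k : Fin n} {B : Fin n → ℤ}

lemma inversionIndicator_update_add_swap (hjk : (j : ℕ) + 1 = k) (hB : B k ≤ B j)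
    (p : Fin n × Fin n) :
    inversionIndicator (update B k (B j)) p +
        inversionIndicator (update B j (B k)) (Prod.map (Equiv.swap j k) (Equiv.swap j k) p) =
      inversionIndicator B p +
        inversionIndicator B (Prod.map (Equiv.swap j k) (Equiv.swap j k) p) := by
  simp only [inversionIndicator, Prod.map, update_apply, Equiv.swap_apply_def]
  split_ifs <;> subst_vars <;> simp only [Fin.lt_def, Fin.ext_iff, not_true_eq_false] at * <;>
    omega

lemma invCount_update_add_invCount_update (hjk : (j : ℕ) + 1 = k) (hB : B k ≤ B j) :
    invCount (update B k (B j)) + invCount (update B j (B k)) = 2 * invCount B := by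
  let σ := (Equiv.swap j k).prodCongr (Equiv.swap j k)
  simp only [invCount_eq_sum_inversionIndicator]
  rw [← σ.sum_comp (inversionIndicator (update B j (B k))), two_mul]
  nth_rewrite 2 [← σ.sum_comp (inversionIndicator B)]
  rw [← Finset.sum_add_distrib, ← Finset.sum_add_distrib]
  exact Finset.sum_congr rfl fun p _ => inversionIndicator_update_add_swap hjk hB p

lemma Δ_update_add_Δ_update_le {m : Fin n → ℤ} (hm : m j ≤ m k) (hjk : (j : ℕ) + 1 = k)
    (hB : B k ≤ B j) :
    Δ m (update B k (B j)) + Δ m (update B j (B k)) ≤ 2 * Δ m B := by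
  have hcost := abs_sub_add_abs_sub_le_of_le hB hm
  have hinv := invCount_update_add_invCount_update hjk hB
  simp only [Δ, cost_update] at *
  omega

end AdjacentPositions

/-- If `B` minimizes `Δ` over all integer sequences with entries in `[m 0, m (last)]`, and
among such minimizers has maximum sum of entries, then `B` is non-decreasing. -/
theorem minimizer_monotone (n : ℕ) (m : Fin (n + 1) → ℤ) (hm : StrictMono m)
    (B : Fin (n + 1) → ℤ)
    (hBrange : ∀ i, m 0 ≤ B i ∧ B i ≤ m (Fin.last n))
    (hBmin : ∀ A : Fin (n + 1) → ℤ, (∀ i, m 0 ≤ A i ∧ A i ≤ m (Fin.last n)) →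
      Δ m B ≤ Δ m A)
    (hBmax : ∀ A : Fin (n + 1) → ℤ, (∀ i, m 0 ≤ A i ∧ A i ≤ m (Fin.last n)) →
      Δ m A = Δ m B → ∑ i, A i ≤ ∑ i, B i) :
    Monotone B := by
  refine Fin.monotone_iff_le_succ.mpr fun i => not_lt.mp fun hdesc => ?_
  have hupdate_range : ∀ k x, m 0 ≤ x ∧ x ≤ m (Fin.last n) →
      ∀ l, m 0 ≤ update B k x l ∧ update B k x l ≤ m (Fin.last n) := fun k x hx =>
    forall_update_iff B (p := fun l y => m 0 ≤ y ∧ y ≤ m (Fin.last n)) |>.mpr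
      ⟨hx, fun l _ => hBrange l⟩
  have hraised := hupdate_range i.succ _ (hBrange i.castSucc)
  have hlowered := hupdate_range i.castSucc _ (hBrange i.succ)
  have hΔ := Δ_update_add_Δ_update_le (hm i.castSucc_lt_succ).le (by simp) hdesc.le
  have hraised_min : Δ m (update B i.succ (B i.castSucc)) = Δ m B := by
    linarith [hBmin _ hraised, hBmin _ hlowered]
  have hsum := hBmax _ hraised hraised_min
  rw [Fintype.sum_update_eq_sum_add_sub] at hsum
  linarith
end

section
/- Suppose nonnegative reals Err_1, Err_2 and integers r < r' satisfy Err_1 + Err_2 ≥ N* + k(r' − r − 1) with N* ≥ 0, k ≥ 0. If m chains occur in phases r_1 < r_2 < ... < r_m and for each i one has E_i + F_i ≥ N*_i + k(r_m + 1 − r_i) for a shared error E (E_i = E for all i) and distinct errors F_i, then summing yields m·E + Σ F_i ≥ k·m(m−1)/2 + Σ N*_i ≥ Σ ((m+1)/2)·N*_i, provided N*_i ≤ k for all i. -/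
lemma strictMono_gap {m : ℕ} (r : Fin m → ℤ) (hr : StrictMono r) :
    ∀ d : ℕ, ∀ i j : Fin m, (j : ℕ) = (i : ℕ) + d → r i + d ≤ r j := by
  intro d
  induction d with
  | zero =>
      intro i j h
      have : i = j := Fin.ext (by omega)
      simp [this]
  | succ d ih =>
      intro i j h
      have hlt : (i : ℕ) + d < m := by omega
      have h1 : r i + d ≤ r ⟨(i : ℕ) + d, hlt⟩ := ih i ⟨(i : ℕ) + d, hlt⟩ rfl
      have h2 : r ⟨(i : ℕ) + d, hlt⟩ < r j := hr (by simp [Fin.lt_def]; omega)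
      push_cast
      omega

lemma sum_id_real (n : ℕ) : ∑ i : Fin n, ((i : ℕ) : ℝ) = (n : ℝ) * ((n : ℝ) - 1) / 2 := by
  rw [Fin.sum_univ_eq_sum_range]
  induction n with
  | zero => simp
  | succ p ih =>
      rw [Finset.sum_range_succ, ih]
      push_cast
      ring

/-- The error-charging summation: `m` chains in strictly increasing phases `r 1 < ... < r m`
each satisfy `E + F i ≥ N i + k (r m + 1 − r i)` with a shared error term `E`; if moreover
`0 ≤ N i ≤ k`, then `m E + ∑ F i ≥ k m(m−1)/2 + ∑ N i ≥ ∑ ((m+1)/2) N i`. -/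
theorem error_charging (m : ℕ) (hm : 1 ≤ m) (k : ℝ) (hk : 0 ≤ k)
    (r : Fin m → ℤ) (hr : StrictMono r)
    (E : ℝ) (F N : Fin m → ℝ)
    (hN0 : ∀ i, 0 ≤ N i) (hNk : ∀ i, N i ≤ k)
    (hineq : ∀ i, E + F i ≥ N i + k * (((r ⟨m - 1, by omega⟩ : ℤ) : ℝ) + 1 - ((r i : ℤ) : ℝ))) :
    (m : ℝ) * E + ∑ i, F i ≥ k * (m * (m - 1)) / 2 + ∑ i, N i ∧
    k * (m * (m - 1)) / 2 + ∑ i, N i ≥ ∑ i, ((m : ℝ) + 1) / 2 * N i := by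
  set last : Fin m := ⟨m - 1, by omega⟩ with hlast
  -- gap bound
  have hgap : ∀ i : Fin m, ((m : ℝ) - 1 - (i : ℕ)) ≤ ((r last : ℤ) : ℝ) - ((r i : ℤ) : ℝ) := by
    intro i
    have hi : (last : ℕ) = (i : ℕ) + (m - 1 - (i : ℕ)) := by
      simp [hlast]; omega
    have := strictMono_gap r hr (m - 1 - (i : ℕ)) i last hi
    have h2 : ((r i : ℝ)) + ((m : ℝ) - 1 - (i : ℕ)) ≤ (r last : ℝ) := by
      have hile : (i : ℕ) ≤ m - 1 := by omega
      push_cast at this ⊢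
      have : ((r i : ℝ)) + ((m - 1 - (i : ℕ) : ℕ) : ℝ) ≤ (r last : ℝ) := by
        exact_mod_cast this
      push_cast at this
      rw [Nat.cast_sub hile, Nat.cast_sub hm] at this
      push_cast at this
      linarith
    linarith
  -- pointwise bound
  have hpt : ∀ i : Fin m, N i + k * ((m : ℝ) - (i : ℕ)) ≤ E + F i := by
    intro i
    have h1 := hineq i
    have h2 := hgap i
    have h3 : k * ((m : ℝ) - (i : ℕ)) ≤ k * (((r last : ℤ) : ℝ) + 1 - ((r i : ℤ) : ℝ)) := by
      apply mul_le_mul_of_nonneg_left _ hk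
      linarith
    linarith [h1, h3]
  have hsum : ∑ i : Fin m, (N i + k * ((m : ℝ) - (i : ℕ))) ≤ ∑ i : Fin m, (E + F i) :=
    Finset.sum_le_sum (fun i _ => hpt i)
  -- compute sums
  have hid : ∑ i : Fin m, ((i : ℕ) : ℝ) = (m : ℝ) * ((m : ℝ) - 1) / 2 := sum_id_real m
  have hSconst : ∑ _i : Fin m, E = (m : ℝ) * E := by
    rw [Finset.sum_const, Finset.card_univ, Fintype.card_fin, nsmul_eq_mul]
  rw [Finset.sum_add_distrib, Finset.sum_add_distrib] at hsum
  rw [hSconst] at hsum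
  have hks : ∑ i : Fin m, k * ((m : ℝ) - (i : ℕ)) = k * ((m : ℝ) * (m : ℝ) - (m : ℝ) * ((m : ℝ) - 1) / 2) := by
    rw [← Finset.mul_sum]
    congr 1
    rw [Finset.sum_sub_distrib, hid, Finset.sum_const, Finset.card_univ, Fintype.card_fin,
      nsmul_eq_mul]
  rw [hks] at hsum
  have hNsum : ∑ i, N i ≤ (m : ℝ) * k := by
    calc ∑ i, N i ≤ ∑ _i : Fin m, k := Finset.sum_le_sum (fun i _ => hNk i)
    _ = (m : ℝ) * k := by
        rw [Finset.sum_const, Finset.card_univ, Fintype.card_fin, nsmul_eq_mul]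
  have hNnn : 0 ≤ ∑ i, N i := Finset.sum_nonneg (fun i _ => hN0 i)
  have hm1 : (1 : ℝ) ≤ (m : ℝ) := by exact_mod_cast hm
  constructor
  · nlinarith [hsum, mul_nonneg hk (by nlinarith : (0:ℝ) ≤ (m:ℝ) * ((m:ℝ)-1) / 2)]
  · have h2 : ∑ i, ((m : ℝ) + 1) / 2 * N i = ((m : ℝ) + 1) / 2 * ∑ i, N i := by
      rw [Finset.mul_sum]
    rw [h2]
    nlinarith [hNsum, hNnn, hm1, hk]
end
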